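/- For every weak NBA with n states (every SCC accepting or rejecting), there exists an equivalent deterministic automaton (with a co-Büchi/parity acceptance) with at most 3^n states, obtained via the breakpoint construction whose states are pairs (T, B) of disjoint subsets of Q. -/

import Mathlib

structure NBA (Q A : Type) where
  Δ : Q → A → Set Q
  Q0 : Set Q
  F : Set Q

namespace NBA

variable {Q A : Type}

def ΔSet (M : NBA Q A) (P : Set Q) (a : A) : Set Q := ⋃ p ∈ P, M.Δ p a

def psWord (M : NBA Q A) : Set Q → List A → Set Q
  | P, [] => P
  | P, a :: u => psWord M (M.ΔSet P a) u

def step (M : NBA Q A) (p q : Q) : Prop := ∃ a, q ∈ M.Δ p a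

def reach (M : NBA Q A) : Q → Q → Prop := Relation.TransGen M.step

def scc (M : NBA Q A) (p : Q) : Set Q := {q | p = q ∨ (M.reach p q ∧ M.reach q p)}

def IsSCC (M : NBA Q A) (C : Set Q) : Prop := ∃ p, C = M.scc p

def TrivialSCC (M : NBA Q A) (C : Set Q) : Prop := ∃ q, C = {q} ∧ ¬ M.reach q q

def RejectingSCC (M : NBA Q A) (C : Set Q) : Prop := M.TrivialSCC C ∨ C ∩ M.F = ∅

def AcceptingSCC (M : NBA Q A) (C : Set Q) : Prop :=
  M.IsSCC C ∧ ¬ M.TrivialSCC C ∧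
    ∀ (n : ℕ) (f : ℕ → Q), 0 < n → f n = f 0 → (∀ i ≤ n, f i ∈ C) →
      (∀ i < n, M.step (f i) (f (i + 1))) → ∃ i < n, f i ∈ M.F

def accUnion (M : NBA Q A) : Set Q := {q | ∃ C, M.AcceptingSCC C ∧ q ∈ C}

def DetSCC (M : NBA Q A) (C : Set Q) : Prop :=
  M.IsSCC C ∧ ∀ p ∈ C, ∀ a, Set.Subsingleton (M.Δ p a ∩ C)

def IsRunFrom (M : NBA Q A) (ρ : ℕ → Q) (w : ℕ → A) : Prop :=
  ∀ i, ρ (i + 1) ∈ M.Δ (ρ i) (w i)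

def IsRun (M : NBA Q A) (ρ : ℕ → Q) (w : ℕ → A) : Prop :=
  ρ 0 ∈ M.Q0 ∧ M.IsRunFrom ρ w

def Accepting (M : NBA Q A) (ρ : ℕ → Q) : Prop := ∀ N, ∃ n ≥ N, ρ n ∈ M.F

def LangFrom (M : NBA Q A) (P : Set Q) : Set (ℕ → A) :=
  {w | ∃ ρ, ρ 0 ∈ P ∧ M.IsRunFrom ρ w ∧ M.Accepting ρ}

def Lang (M : NBA Q A) : Set (ℕ → A) := M.LangFrom M.Q0

def prof (M : NBA Q A) (ρ : ℕ → Q) : ℕ → Prop := fun i => ρ i ∈ M.F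

def psStep (M : NBA Q A) (P P' : Set Q) : Prop := ∃ a, P' = M.ΔSet P a

def psReach (M : NBA Q A) : Set Q → Set Q → Prop := Relation.TransGen M.psStep

def psScc (M : NBA Q A) (P : Set Q) : Set (Set Q) :=
  {P' | P = P' ∨ (M.psReach P P' ∧ M.psReach P' P)}

def Weak (M : NBA Q A) : Prop :=
  ∀ C, M.IsSCC C → M.AcceptingSCC C ∨ M.RejectingSCC C

end NBA

def profLt (z z' : ℕ → Prop) : Prop :=
  ∃ i, (∀ j < i, (z j ↔ z' j)) ∧ ¬ z i ∧ z' i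

def profLe (z z' : ℕ → Prop) : Prop :=
  profLt z z' ∨ ∀ i, (z i ↔ z' i)

structure DPA (Q A : Type) where
  δ : Q → A → Q
  init : Q
  c : Q → A → ℕ

namespace DPA

variable {Q A : Type}

def run (M : DPA Q A) (s : Q) (w : ℕ → A) : ℕ → Q
  | 0 => s
  | n + 1 => M.δ (run M s w n) (w n)

def InfOftPrio (M : DPA Q A) (s : Q) (w : ℕ → A) (k : ℕ) : Prop :=
  ∀ N, ∃ n ≥ N, M.c (M.run s w n) (w n) = k

def AcceptFrom (M : DPA Q A) (s : Q) (w : ℕ → A) : Prop :=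
  ∃ k, M.InfOftPrio s w k ∧ (∀ j, M.InfOftPrio s w j → k ≤ j) ∧ Even k

def LangFrom (M : DPA Q A) (s : Q) : Set (ℕ → A) := {w | M.AcceptFrom s w}

def Lang (M : DPA Q A) : Set (ℕ → A) := M.LangFrom M.init

def runWord (M : DPA Q A) : Q → List A → Q
  | s, [] => s
  | s, a :: u => runWord M (M.δ s a) u

def Reach (M : DPA Q A) (s t : Q) : Prop := ∃ u : List A, M.runWord s u = t

def mealyOut (M : DPA Q A) : Q → List A → List ℕ
  | _, [] => []
  | s, a :: u => M.c s a :: mealyOut M (M.δ s a) u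

def MealyEquiv (M : DPA Q A) (p q : Q) : Prop := ∀ u, M.mealyOut p u = M.mealyOut q u

def dstep (M : DPA Q A) (s t : Q) : Prop := ∃ a, M.δ s a = t

def dreach (M : DPA Q A) : Q → Q → Prop := Relation.TransGen M.dstep

def dscc (M : DPA Q A) (s : Q) : Set Q := {t | s = t ∨ (M.dreach s t ∧ M.dreach t s)}

end DPA

def parentRel (n : ℕ) (α : Fin n ≃ Fin n) (i k : Fin n) : Prop :=
  IsLeast {k' : Fin n | i < k' ∧ α k' < α i} k

def descend (n : ℕ) (α : Fin n ≃ Fin n) (j i : Fin n) : Prop :=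
  Relation.ReflTransGen (parentRel n α) j i

def subU {Q : Type} (n : ℕ) (S : Fin n → Set Q) (α : Fin n ≃ Fin n) (i : Fin n) : Set Q :=
  ⋃ j ∈ {j | descend n α j i}, S j

def sliceEnc {Q : Type} (n : ℕ) (S : Fin n → Set Q) (α : Fin n ≃ Fin n) : Fin n → Set Q :=
  fun r => subU n S α (α.symm r)
open Classical in
noncomputable def NBA.bpδ {Q A : Type} (M : NBA Q A) :
    {p : Set Q × Set Q // p.2 ⊆ p.1} → A → {p : Set Q × Set Q // p.2 ⊆ p.1} :=
  fun s a => ⟨(M.ΔSet s.1.1 a,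
      (if s.1.2 = ∅ then M.ΔSet s.1.1 a else M.ΔSet s.1.2 a) ∩ M.accUnion), by
    split
    · exact Set.inter_subset_left
    · refine Set.inter_subset_left.trans ?_
      exact Set.biUnion_subset_biUnion_left s.2⟩

open Classical in
noncomputable def NBA.bpD {Q A : Type} (M : NBA Q A) :
    DPA {p : Set Q × Set Q // p.2 ⊆ p.1} A where
  δ := M.bpδ
  init := ⟨(M.Q0, M.Q0 ∩ M.accUnion), Set.inter_subset_left⟩
  c := fun s a => if (M.bpδ s a).1.2 = ∅ then 1 else 2
namespace NBA

variable {Q A : Type}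

lemma reach_run {M : NBA Q A} {ρ : ℕ → Q} {w : ℕ → A} (h : M.IsRunFrom ρ w) :
    ∀ n m, n < m → M.reach (ρ n) (ρ m) := by
  intro n m hnm
  induction m with
  | zero => omega
  | succ m ih =>
    rcases Nat.lt_succ_iff_lt_or_eq.mp hnm with h' | h'
    · exact (ih h').tail ⟨w m, h m⟩
    · subst h'; exact Relation.TransGen.single ⟨w n, h n⟩

lemma scc_subset_of {M : NBA Q A} {p q : Q} (h1 : M.reach p q) (h2 : M.reach q p) :
    M.scc p ⊆ M.scc q := by
  intro r hr
  rcases hr with hr | ⟨h3, h4⟩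
  · subst hr; exact Or.inr ⟨h2, h1⟩
  · exact Or.inr ⟨h2.trans h3, h4.trans h1⟩

lemma scc_eq_of_mem {M : NBA Q A} {p q : Q} (h : q ∈ M.scc p) : M.scc p = M.scc q := by
  rcases h with h | ⟨h1, h2⟩
  · rw [h]
  · exact Set.Subset.antisymm (scc_subset_of h1 h2) (scc_subset_of h2 h1)

/-- states occurring infinitely often in ρ -/
def infSet (ρ : ℕ → Q) : Set Q := {q | ∀ N, ∃ n ≥ N, ρ n = q}

lemma infSet_nonempty [Fintype Q] (ρ : ℕ → Q) : ∃ q, q ∈ infSet ρ := by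
  obtain ⟨q, hq⟩ := Finite.exists_infinite_fiber ρ
  rw [Set.infinite_coe_iff] at hq
  refine ⟨q, fun N => ?_⟩
  obtain ⟨n, hn, hn'⟩ := hq.exists_gt N
  exact ⟨n, le_of_lt hn', hn⟩

lemma eventually_infSet [Fintype Q] (ρ : ℕ → Q) : ∃ N, ∀ n ≥ N, ρ n ∈ infSet ρ := by
  classical
  have key : ∀ q : Q, ∃ N : ℕ, q ∉ infSet ρ → ∀ n ≥ N, ρ n ≠ q := by
    intro q
    by_cases hq : q ∈ infSet ρ
    · exact ⟨0, fun h => absurd hq h⟩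
    · simp only [infSet, Set.mem_setOf_eq, not_forall, not_exists] at hq
      obtain ⟨N, hN⟩ := hq
      exact ⟨N, fun _ n hn => by have := hN n; tauto⟩
  choose N hN using key
  refine ⟨Finset.univ.sup N, fun n hn => ?_⟩
  by_contra h
  exact hN (ρ n) h n (le_trans (Finset.le_sup (Finset.mem_univ (ρ n))) hn) rfl

lemma infSet_reach {M : NBA Q A} {ρ : ℕ → Q} {w : ℕ → A} (h : M.IsRunFrom ρ w)
    {p q : Q} (hp : p ∈ infSet ρ) (hq : q ∈ infSet ρ) : M.reach p q := by
  obtain ⟨n, _, hn⟩ := hp 0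
  obtain ⟨m, hm, hm'⟩ := hq (n + 1)
  exact hn ▸ hm' ▸ reach_run h n m (by omega)

lemma acc_run_eventually [Fintype Q] {M : NBA Q A} (hweak : M.Weak)
    {ρ : ℕ → Q} {w : ℕ → A} (hr : M.IsRunFrom ρ w) (hacc : M.Accepting ρ) :
    ∃ N, ∀ n ≥ N, ρ n ∈ M.accUnion := by
  obtain ⟨q₀, hq₀⟩ := infSet_nonempty ρ
  obtain ⟨N, hN⟩ := eventually_infSet ρ
  have hIC : infSet ρ ⊆ M.scc q₀ := fun q hq =>
    Or.inr ⟨infSet_reach hr hq₀ hq, infSet_reach hr hq hq₀⟩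
  have hscc : M.IsSCC (M.scc q₀) := ⟨q₀, rfl⟩
  have hC : M.AcceptingSCC (M.scc q₀) := by
    rcases hweak _ hscc with h | h
    · exact h
    · exfalso
      rcases h with ⟨q, hq, hqr⟩ | h
      · have : q₀ ∈ M.scc q₀ := Or.inl rfl
        rw [hq] at this
        exact hqr (this ▸ infSet_reach hr hq₀ hq₀)
      · obtain ⟨n, hn, hnF⟩ := hacc N
        have : ρ n ∈ M.scc q₀ ∩ M.F := ⟨hIC (hN n hn), hnF⟩
        rw [h] at this
        exact this
  exact ⟨N, fun n hn => ⟨M.scc q₀, hC, hIC (hN n hn)⟩⟩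

lemma eventually_acc_run [Fintype Q] {M : NBA Q A}
    {ρ : ℕ → Q} {w : ℕ → A} (hr : M.IsRunFrom ρ w) {N₀ : ℕ}
    (hG : ∀ n ≥ N₀, ρ n ∈ M.accUnion) : M.Accepting ρ := by
  obtain ⟨q₀, hq₀⟩ := infSet_nonempty ρ
  obtain ⟨N, hN⟩ := eventually_infSet ρ
  have hIC : infSet ρ ⊆ M.scc q₀ := fun q hq =>
    Or.inr ⟨infSet_reach hr hq₀ hq, infSet_reach hr hq hq₀⟩
  -- identify the accepting SCC containing the tail
  obtain ⟨C', hC', hmem⟩ := hG (max N N₀) (le_max_right _ _)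
  obtain ⟨p', hp'⟩ := hC'.1
  have hCeq : M.scc q₀ = C' := by
    have h1 : ρ (max N N₀) ∈ M.scc q₀ := hIC (hN _ (le_max_left _ _))
    rw [hp'] at hmem ⊢
    rw [scc_eq_of_mem h1, scc_eq_of_mem hmem]
  intro N'
  set n := max N' N with hn_def
  have hnN : n ≥ N := le_max_right _ _
  obtain ⟨m, hm, hm'⟩ := hN n hnN n.succ
  have hcyc := hC'.2.2 (m - n) (fun i => ρ (n + i)) (by omega)
    (by show ρ (n + (m - n)) = ρ (n + 0); rw [show n + (m - n) = m by omega, hm', Nat.add_zero])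
    (by
      intro i _
      rw [← hCeq]
      exact hIC (hN _ (by omega)))
    (fun i _ => ⟨w (n + i), hr (n + i)⟩)
  obtain ⟨i, _, hiF⟩ := hcyc
  exact ⟨n + i, by omega, hiF⟩

lemma lang_iff_eventually [Fintype Q] {M : NBA Q A} (hweak : M.Weak) (w : ℕ → A) :
    w ∈ M.Lang ↔ ∃ ρ, ρ 0 ∈ M.Q0 ∧ M.IsRunFrom ρ w ∧ ∃ N, ∀ n ≥ N, ρ n ∈ M.accUnion := by
  constructor
  · rintro ⟨ρ, h0, hr, hacc⟩
    exact ⟨ρ, h0, hr, acc_run_eventually hweak hr hacc⟩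
  · rintro ⟨ρ, h0, hr, N, hN⟩
    exact ⟨ρ, h0, hr, eventually_acc_run hr hN⟩

end NBA
namespace NBA

variable {Q A : Type}

lemma mem_ΔSet {M : NBA Q A} {P : Set Q} {a : A} {q : Q} :
    q ∈ M.ΔSet P a ↔ ∃ p ∈ P, q ∈ M.Δ p a := by simp [ΔSet]

section BP

variable (M : NBA Q A) (w : ℕ → A)

/-- S-component of the breakpoint run -/
noncomputable def bpS (n : ℕ) : Set Q := ((M.bpD.run M.bpD.init w n)).1.1
/-- O-component of the breakpoint run -/
noncomputable def bpO (n : ℕ) : Set Q := ((M.bpD.run M.bpD.init w n)).1.2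

lemma bpS_zero : M.bpS w 0 = M.Q0 := rfl

lemma bpO_zero : M.bpO w 0 = M.Q0 ∩ M.accUnion := rfl

lemma bpS_succ (n : ℕ) : M.bpS w (n + 1) = M.ΔSet (M.bpS w n) (w n) := rfl

open Classical in
lemma bpO_succ (n : ℕ) : M.bpO w (n + 1) =
    (if M.bpO w n = ∅ then M.ΔSet (M.bpS w n) (w n) else M.ΔSet (M.bpO w n) (w n)) ∩
      M.accUnion := rfl

lemma bpO_subset_bpS (n : ℕ) : M.bpO w n ⊆ M.bpS w n :=
  (M.bpD.run M.bpD.init w n).2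

lemma bpO_subset_acc (n : ℕ) : M.bpO w n ⊆ M.accUnion := by
  cases n with
  | zero => exact Set.inter_subset_right
  | succ n => rw [bpO_succ]; exact Set.inter_subset_right

open Classical in
lemma bp_c_eq (n : ℕ) : M.bpD.c (M.bpD.run M.bpD.init w n) (w n) =
    if M.bpO w (n + 1) = ∅ then 1 else 2 := rfl

lemma bp_accept_iff : M.bpD.AcceptFrom M.bpD.init w ↔
    ∃ N, ∀ n ≥ N, M.bpO w n ≠ ∅ := by
  classical
  constructor
  · rintro ⟨k, hk, hmin, heven⟩
    have hk2 : k = 2 := by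
      obtain ⟨n, -, hn⟩ := hk 0
      rw [bp_c_eq] at hn
      have hk12 : k = 1 ∨ k = 2 := by split at hn <;> omega
      rcases hk12 with h | h
      · rw [h] at heven; exact absurd heven (by decide)
      · exact h
    have h1 : ¬ M.bpD.InfOftPrio M.bpD.init w 1 := by
      intro h
      have := hmin 1 h
      omega
    simp only [DPA.InfOftPrio, not_forall, not_exists] at h1
    obtain ⟨N, hN⟩ := h1
    refine ⟨N + 1, fun n hn => ?_⟩
    obtain ⟨m, rfl⟩ : ∃ m, n = m + 1 := ⟨n - 1, by omega⟩
    have hm : M.bpD.c (M.bpD.run M.bpD.init w m) (w m) ≠ 1 :=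
      fun hc => hN m ⟨by omega, hc⟩
    rw [bp_c_eq] at hm
    intro hO
    rw [if_pos hO] at hm
    exact hm rfl
  · rintro ⟨N, hN⟩
    have hc : ∀ n ≥ N, M.bpD.c (M.bpD.run M.bpD.init w n) (w n) = 2 := by
      intro n hn
      rw [bp_c_eq, if_neg (hN (n + 1) (by omega))]
    refine ⟨2, fun N' => ⟨max N N', le_max_right _ _, hc _ (le_max_left _ _)⟩,
      fun j hj => ?_, by decide⟩
    obtain ⟨n, hn, hjn⟩ := hj N
    rw [hc n hn] at hjn
    omega

end BP

end NBA
namespace NBA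

variable {Q A : Type}

lemma bp_mem_S {M : NBA Q A} {w : ℕ → A} {ρ : ℕ → Q} (h0 : ρ 0 ∈ M.Q0)
    (hr : M.IsRunFrom ρ w) : ∀ n, ρ n ∈ M.bpS w n := by
  intro n
  induction n with
  | zero => rw [bpS_zero]; exact h0
  | succ n ih => rw [bpS_succ]; exact mem_ΔSet.mpr ⟨ρ n, ih, hr n⟩

lemma bp_O_ne_of_nba {M : NBA Q A} {w : ℕ → A}
    (h : ∃ ρ, ρ 0 ∈ M.Q0 ∧ M.IsRunFrom ρ w ∧ ∃ N, ∀ n ≥ N, ρ n ∈ M.accUnion) :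
    ∃ N, ∀ n ≥ N, M.bpO w n ≠ ∅ := by
  classical
  obtain ⟨ρ, h0, hr, N, hG⟩ := h
  by_cases hcase : ∃ n₀ ≥ N, M.bpO w n₀ = ∅
  · obtain ⟨n₀, hn₀, hO⟩ := hcase
    have key : ∀ k, ρ (n₀ + 1 + k) ∈ M.bpO w (n₀ + 1 + k) := by
      intro k
      induction k with
      | zero =>
        rw [Nat.add_zero, bpO_succ, if_pos hO]
        exact ⟨mem_ΔSet.mpr ⟨ρ n₀, bp_mem_S h0 hr n₀, hr n₀⟩, hG _ (by omega)⟩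
      | succ k ih =>
        have hne : M.bpO w (n₀ + 1 + k) ≠ ∅ :=
          fun he => by rw [he] at ih; exact ih
        rw [show n₀ + 1 + (k + 1) = (n₀ + 1 + k) + 1 by omega, bpO_succ, if_neg hne]
        exact ⟨mem_ΔSet.mpr ⟨_, ih, hr _⟩, hG _ (by omega)⟩
    refine ⟨n₀ + 1, fun n hn => ?_⟩
    obtain ⟨k, rfl⟩ : ∃ k, n = n₀ + 1 + k := ⟨n - (n₀ + 1), by omega⟩
    exact fun he => by have := key k; rw [he] at this; exact this
  · push_neg at hcase
    exact ⟨N, fun n hn => (hcase n hn).ne_empty⟩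

/-- backward chain through the S-component to an initial state -/
lemma bp_S_chain {M : NBA Q A} (w : ℕ → A) :
    ∀ n, ∀ q ∈ M.bpS w n, ∃ c : ℕ → Q, c 0 ∈ M.Q0 ∧
      (∀ i < n, c (i + 1) ∈ M.Δ (c i) (w i)) ∧ c n = q := by
  classical
  intro n
  induction n with
  | zero =>
    intro q hq
    exact ⟨fun _ => q, by rwa [bpS_zero] at hq, fun i hi => absurd hi (by omega), rfl⟩
  | succ n ih =>
    intro q hq
    rw [bpS_succ] at hq
    obtain ⟨p, hp, hstep⟩ := mem_ΔSet.mp hq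
    obtain ⟨c, hc0, hcs, hce⟩ := ih p hp
    refine ⟨Function.update c (n + 1) q, ?_, ?_, ?_⟩
    · rwa [Function.update_of_ne (by omega)]
    · intro i hi
      rcases Nat.lt_succ_iff_lt_or_eq.mp hi with hi' | hi'
      · rw [Function.update_of_ne (by omega), Function.update_of_ne (by omega)]
        exact hcs i hi'
      · subst hi'
        rw [Function.update_self, Function.update_of_ne (by omega), hce]
        exact hstep
    · rw [Function.update_self]

end NBA
namespace NBA

variable {Q A : Type}

/-- a chain starting at `q` at time `n`, valid up to time `m` -/
def chF (M : NBA Q A) (w : ℕ → A) (O : ℕ → Set Q) (n m : ℕ) (q : Q) : Prop :=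
  ∃ c : ℕ → Q, c n = q ∧ (∀ i, n ≤ i → i ≤ m → c i ∈ O i) ∧
    (∀ i, n ≤ i → i < m → c (i + 1) ∈ M.Δ (c i) (w i))

lemma chF_mono {M : NBA Q A} {w : ℕ → A} {O : ℕ → Set Q} {n m m' : ℕ} {q : Q}
    (h : M.chF w O n m q) (h' : m' ≤ m) : M.chF w O n m' q := by
  obtain ⟨c, h1, h2, h3⟩ := h
  exact ⟨c, h1, fun i hi hi' => h2 i hi (by omega), fun i hi hi' => h3 i hi (by omega)⟩

/-- a state at time `n` from which arbitrarily long chains start -/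
def gd (M : NBA Q A) (w : ℕ → A) (O : ℕ → Set Q) (n : ℕ) (q : Q) : Prop :=
  q ∈ O n ∧ ∀ m ≥ n, M.chF w O n m q

lemma chain_exists {M : NBA Q A} {w : ℕ → A} {O : ℕ → Set Q}
    (hstep : ∀ n, O (n + 1) ⊆ M.ΔSet (O n) (w n)) :
    ∀ m n, n ≤ m → ∀ q ∈ O m, ∃ c : ℕ → Q, c m = q ∧
      (∀ i, n ≤ i → i ≤ m → c i ∈ O i) ∧
      (∀ i, n ≤ i → i < m → c (i + 1) ∈ M.Δ (c i) (w i)) := by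
  classical
  intro m
  induction m with
  | zero =>
    intro n hn q hq
    refine ⟨fun _ => q, rfl, fun i hi hi' => ?_, fun i _ hi' => by omega⟩
    obtain rfl : i = 0 := by omega
    exact hq
  | succ m ih =>
    intro n hn q hq
    rcases Nat.lt_or_ge n (m + 1) with hlt | hge
    · obtain ⟨p, hp, hd⟩ := mem_ΔSet.mp (hstep m hq)
      obtain ⟨c, hce, hc1, hc2⟩ := ih n (by omega) p hp
      refine ⟨Function.update c (m + 1) q, Function.update_self _ _ _, ?_, ?_⟩
      · intro i hi hi'
        rcases Nat.lt_or_ge i (m + 1) with h' | h'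
        · rw [Function.update_of_ne (by omega)]
          exact hc1 i hi (by omega)
        · obtain rfl : i = m + 1 := by omega
          rw [Function.update_self]
          exact hq
      · intro i hi hi'
        rcases Nat.lt_or_ge i m with h' | h'
        · rw [Function.update_of_ne (by omega), Function.update_of_ne (by omega)]
          exact hc2 i hi h'
        · obtain rfl : i = m := by omega
          rw [Function.update_self, Function.update_of_ne (by omega), hce]
          exact hd
    · obtain rfl : n = m + 1 := by omega
      refine ⟨fun _ => q, rfl, fun i hi hi' => ?_, fun i hi hi' => by omega⟩
      obtain rfl : i = m + 1 := by omega
      exact hq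

lemma gd_exists [Fintype Q] {M : NBA Q A} {w : ℕ → A} {O : ℕ → Set Q}
    (hne : ∀ n, O n ≠ ∅) (hstep : ∀ n, O (n + 1) ⊆ M.ΔSet (O n) (w n)) (n : ℕ) :
    ∃ q, M.gd w O n q := by
  classical
  by_contra hno
  push_neg at hno
  have key : ∀ q : Q, ∃ m : ℕ, q ∈ O n → n ≤ m ∧ ¬ M.chF w O n m q := by
    intro q
    by_cases hq : q ∈ O n
    · have := hno q
      simp only [gd, not_and, not_forall] at this
      obtain ⟨m, hm, hm'⟩ := this hq
      exact ⟨m, fun _ => ⟨hm, hm'⟩⟩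
    · exact ⟨n, fun h => absurd h hq⟩
  choose f hf using key
  set m' : ℕ := max n (Finset.univ.sup f) with hm'
  obtain ⟨q', hq'⟩ := Set.nonempty_iff_ne_empty.mpr (hne m')
  obtain ⟨c, hce, hc1, hc2⟩ := chain_exists hstep m' n (le_max_left _ _) q' hq'
  have hcn : c n ∈ O n := hc1 n le_rfl (le_max_left _ _)
  have hch : M.chF w O n m' (c n) := ⟨c, rfl, hc1, hc2⟩
  obtain ⟨hle, hnch⟩ := hf (c n) hcn
  exact hnch (chF_mono hch (le_trans (Finset.le_sup (Finset.mem_univ (c n)))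
    (le_max_right _ _)))

lemma gd_step [Fintype Q] {M : NBA Q A} {w : ℕ → A} {O : ℕ → Set Q}
    {n : ℕ} {q : Q} (hq : M.gd w O n q) :
    ∃ q', q' ∈ M.Δ q (w n) ∧ M.gd w O (n + 1) q' := by
  classical
  by_contra hno
  push_neg at hno
  have key : ∀ p : Q, ∃ m : ℕ, p ∈ O (n + 1) → p ∈ M.Δ q (w n) →
      n + 1 ≤ m ∧ ¬ M.chF w O (n + 1) m p := by
    intro p
    by_cases hp : p ∈ O (n + 1) ∧ p ∈ M.Δ q (w n)
    · have := hno p hp.2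
      simp only [gd, not_and, not_forall] at this
      obtain ⟨m, hm, hm'⟩ := this hp.1
      exact ⟨m, fun _ _ => ⟨hm, hm'⟩⟩
    · exact ⟨n + 1, fun h1 h2 => absurd ⟨h1, h2⟩ hp⟩
  choose f hf using key
  set m' : ℕ := max (n + 1) (Finset.univ.sup f) with hm'
  obtain ⟨c, hcs, hc1, hc2⟩ := hq.2 m' (by omega)
  set p := c (n + 1) with hp_def
  have hp1 : p ∈ O (n + 1) := hc1 (n + 1) (by omega) (le_max_left _ _)
  have hp2 : p ∈ M.Δ q (w n) := by
    rw [← hcs]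
    exact hc2 n le_rfl (by omega)
  have hch : M.chF w O (n + 1) m' p :=
    ⟨c, rfl, fun i hi hi' => hc1 i (by omega) hi', fun i hi hi' => hc2 i (by omega) hi'⟩
  obtain ⟨hle, hnch⟩ := hf p hp1 hp2
  exact hnch (chF_mono hch (le_trans (Finset.le_sup (Finset.mem_univ p))
    (le_max_right _ _)))

/-- König-style extraction of an infinite run through nonempty finite layers -/
lemma koenig [Fintype Q] (M : NBA Q A) (w : ℕ → A) (O : ℕ → Set Q)
    (hne : ∀ n, O n ≠ ∅) (hstep : ∀ n, O (n + 1) ⊆ M.ΔSet (O n) (w n)) :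
    ∃ σ : ℕ → Q, (∀ i, σ i ∈ O i) ∧ ∀ i, σ (i + 1) ∈ M.Δ (σ i) (w i) := by
  classical
  obtain ⟨q0, hq0⟩ := gd_exists hne hstep 0
  have step : ∀ n, ∀ p : {q : Q // M.gd w O n q},
      {q' : Q // q' ∈ M.Δ p.1 (w n) ∧ M.gd w O (n + 1) q'} := by
    intro n p
    exact ⟨Classical.choose (gd_step p.2), Classical.choose_spec (gd_step p.2)⟩
  let F : (n : ℕ) → {q : Q // M.gd w O n q} := fun n =>
    Nat.rec ⟨q0, hq0⟩ (fun n p => ⟨(step n p).1, (step n p).2.2⟩) n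
  refine ⟨fun n => (F n).1, fun n => (F n).2.1, fun n => ?_⟩
  exact (step n (F n)).2.1

end NBA
namespace NBA

variable {Q A : Type}

lemma nba_run_of_bp_O_ne [Fintype Q] {M : NBA Q A} {w : ℕ → A}
    (h : ∃ N, ∀ n ≥ N, M.bpO w n ≠ ∅) :
    ∃ ρ, ρ 0 ∈ M.Q0 ∧ M.IsRunFrom ρ w ∧ ∃ N, ∀ n ≥ N, ρ n ∈ M.accUnion := by
  classical
  obtain ⟨N, hN⟩ := h
  set Mb : ℕ := N + 1 with hMb_def
  have hne : ∀ i, M.bpO w (Mb + i) ≠ ∅ := fun i => hN _ (by omega)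
  have hstep : ∀ i, M.bpO w (Mb + (i + 1)) ⊆
      M.ΔSet (M.bpO w (Mb + i)) (w (Mb + i)) := by
    intro i
    rw [show Mb + (i + 1) = (Mb + i) + 1 by omega, bpO_succ,
      if_neg (hN _ (by omega))]
    exact Set.inter_subset_left
  obtain ⟨σ, hσO, hσs⟩ := koenig M (fun i => w (Mb + i)) (fun i => M.bpO w (Mb + i))
    hne hstep
  have hσS : σ 0 ∈ M.bpS w Mb := M.bpO_subset_bpS w Mb (by simpa using hσO 0)
  obtain ⟨c, hc0, hcs, hce⟩ := bp_S_chain w Mb (σ 0) hσS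
  refine ⟨fun n => if n < Mb then c n else σ (n - Mb), ?_, ?_, ⟨Mb, ?_⟩⟩
  · beta_reduce
    rw [if_pos (by omega)]
    exact hc0
  · intro i
    beta_reduce
    rcases Nat.lt_or_ge i Mb with h | h
    · rw [if_pos h]
      rcases Nat.lt_or_ge (i + 1) Mb with h2 | h2
      · rw [if_pos h2]
        exact hcs i h
      · have hMb : i + 1 = Mb := by omega
        rw [if_neg (by omega), hMb, Nat.sub_self, ← hce, ← hMb]
        exact hcs i h
    · rw [if_neg (by omega), if_neg (by omega)]
      have := hσs (i - Mb)
      rw [show Mb + (i - Mb) = i by omega] at this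
      rw [show i + 1 - Mb = (i - Mb) + 1 by omega]
      exact this
  · intro n hn
    beta_reduce
    rw [if_neg (by omega)]
    have := hσO (n - Mb)
    rw [show Mb + (n - Mb) = n by omega] at this
    exact M.bpO_subset_acc w n this

lemma bp_lang [Fintype Q] {M : NBA Q A} (hweak : M.Weak) : M.bpD.Lang = M.Lang := by
  ext w
  have h1 : w ∈ M.bpD.Lang ↔ M.bpD.AcceptFrom M.bpD.init w := Iff.rfl
  rw [h1, bp_accept_iff, lang_iff_eventually hweak]
  exact ⟨nba_run_of_bp_O_ne, bp_O_ne_of_nba⟩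

end NBA
/-- every weak NBA with n states has an equivalent deterministic
parity automaton with at most 3^n states. -/
theorem stmt10 {Q A : Type} [Fintype Q] (M : NBA Q A) (hweak : M.Weak) :
    ∃ (S : Type) (inst : Fintype S) (D : DPA S A),
      D.Lang = M.Lang ∧ @Fintype.card S inst ≤ 3 ^ Fintype.card Q := by
  classical
  set S := {p : Set Q × Set Q // p.2 ⊆ p.1} with hS
  set φ : S → (Q → Fin 3) :=
    fun s q => if q ∈ s.1.2 then 0 else if q ∈ s.1.1 then 1 else 2 with hφdef
  have key : ∀ (u : S) (q : Q), (q ∈ u.1.2 ↔ φ u q = 0) ∧ (q ∈ u.1.1 ↔ φ u q ≠ 2) := by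
    intro u q
    simp only [hφdef]
    by_cases h1 : q ∈ u.1.2
    · rw [if_pos h1]
      exact ⟨⟨fun _ => rfl, fun _ => h1⟩, ⟨fun _ => by decide, fun _ => u.2 h1⟩⟩
    · rw [if_neg h1]
      by_cases h2 : q ∈ u.1.1
      · rw [if_pos h2]
        exact ⟨⟨fun h => absurd h h1, fun h => absurd h (by decide)⟩,
          ⟨fun _ => by decide, fun _ => h2⟩⟩
      · rw [if_neg h2]
        exact ⟨⟨fun h => absurd h h1, fun h => absurd h (by decide)⟩,
          ⟨fun h => absurd h h2, fun h => absurd rfl h⟩⟩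
  have hφ : Function.Injective φ := by
    intro s t h
    have e2 : s.1.2 = t.1.2 := by
      ext q
      rw [(key s q).1, (key t q).1, h]
    have e1 : s.1.1 = t.1.1 := by
      ext q
      rw [(key s q).2, (key t q).2, h]
    exact Subtype.ext (Prod.ext e1 e2)
  letI inst : Fintype S := Fintype.ofInjective φ hφ
  refine ⟨S, inst, M.bpD, NBA.bp_lang hweak, ?_⟩
  calc Fintype.card S ≤ Fintype.card (Q → Fin 3) := Fintype.card_le_of_injective φ hφ
    _ = 3 ^ Fintype.card Q := by simp [Fintype.card_fun]
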